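/- arXiv:1905.04012 — 2 statements merged into one kernel-verified Lean document; each statement's English description precedes it below -/
import Mathlib

section
/- Let n ≥ 1 be an integer and l a real number satisfying l ≥ 2 if n ∈ {1,2,3,4,5}, and l ≥ n/2 − 1 (together with l ≥ 2) if n ≥ 6. Suppose u₀ ∈ H^{l+1}(ℝⁿ) ∩ L^{1,1}(ℝⁿ) and u₁ ∈ H^{l}(ℝⁿ) ∩ L^{1,1}(ℝⁿ). Then there exists a constant C > 0, depending only on n and l, such that for all t ≥ 1, ( ∫_{ℝⁿ} |û(t,ξ)|² dξ )^{1/2} ≤ C·I₀·t^{−n/4}. -/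
/-!
Split frequency space into three zones. For `|ξ| ≤ ζ/2` the characteristic roots are real and
both multipliers are `O(e^{-t|ξ|²})`; since `‖û_j‖_∞ ≤ ‖u_j‖_{1,1}`, a Gaussian integral gives
`t^{-n/2}`. On `ζ/2 < |ξ| ≤ 1` the multipliers are `O(t e^{-ζ²t/4})`, which beats any power of `t`.
For `|ξ| > 1` the damping rate `1/(2(1+|ξ|²))` degenerates; there `e^{-t/(1+|ξ|²)}` is traded for
`(1+|ξ|²)^{l+1} t^{-(l+1)}`, the weight is absorbed by the `H^{l+1}` and `H^l` norms of the data
(`E₁` is `O(1/|ξ|)` there), and `l + 1 ≥ n/2` turns `t^{-(l+1)}` into `t^{-n/2}`.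
-/

open MeasureTheory Real Set

noncomputable section

namespace DampedPlate

variable {n : ℕ}

/-- `ℝⁿ` as a Euclidean space. -/
abbrev Rn (n : ℕ) := EuclideanSpace ℝ (Fin n)

/-- The Fourier transform `f̂(ξ) = ∫ f(x) e^{-i ξ·x} dx` of a real-valued function. -/
def ftr (f : Rn n → ℝ) (ξ : Rn n) : ℂ :=
  ∫ x : Rn n, (f x : ℂ) * Complex.exp (-Complex.I * ((inner ℝ ξ x : ℝ) : ℂ))

/-- The multiplier `E₀(t,ξ)`. -/
def E0 (ζ t : ℝ) (ξ : Rn n) : ℝ :=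
  if ζ < ‖ξ‖ then
    Real.exp (-t / (2 * (1 + ‖ξ‖ ^ 2))) *
      Real.cos (t * Real.sqrt (4 * ‖ξ‖ ^ 2 * (1 + ‖ξ‖ ^ 2) ^ 2 - 1) / (2 * (1 + ‖ξ‖ ^ 2)))
  else
    Real.exp (-t / (2 * (1 + ‖ξ‖ ^ 2))) *
      Real.cosh (t * Real.sqrt (1 - 4 * ‖ξ‖ ^ 2 * (1 + ‖ξ‖ ^ 2) ^ 2) / (2 * (1 + ‖ξ‖ ^ 2)))

/-- The multiplier `E₁(t,ξ)`. -/
def E1 (ζ t : ℝ) (ξ : Rn n) : ℝ :=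
  if ζ < ‖ξ‖ then
    Real.exp (-t / (2 * (1 + ‖ξ‖ ^ 2))) *
      (Real.sin (t * Real.sqrt (4 * ‖ξ‖ ^ 2 * (1 + ‖ξ‖ ^ 2) ^ 2 - 1) / (2 * (1 + ‖ξ‖ ^ 2))) /
        (Real.sqrt (4 * ‖ξ‖ ^ 2 * (1 + ‖ξ‖ ^ 2) ^ 2 - 1) / (2 * (1 + ‖ξ‖ ^ 2))))
  else
    Real.exp (-t / (2 * (1 + ‖ξ‖ ^ 2))) *
      (Real.sinh (t * Real.sqrt (1 - 4 * ‖ξ‖ ^ 2 * (1 + ‖ξ‖ ^ 2) ^ 2) / (2 * (1 + ‖ξ‖ ^ 2))) /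
        (Real.sqrt (1 - 4 * ‖ξ‖ ^ 2 * (1 + ‖ξ‖ ^ 2) ^ 2) / (2 * (1 + ‖ξ‖ ^ 2))))

/-- The Fourier transform of the solution, expressed in terms of the Fourier transforms
`v₀ = û₀`, `v₁ = û₁` of the initial data:
`û(t,ξ) = û₀(ξ)E₀(t,ξ) + (û₁(ξ) + û₀(ξ)/(2(1+|ξ|²))) E₁(t,ξ)`. -/
def uhatC (ζ : ℝ) (v₀ v₁ : Rn n → ℂ) (t : ℝ) (ξ : Rn n) : ℂ :=
  v₀ ξ * ((E0 ζ t ξ : ℝ) : ℂ) +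
    (v₁ ξ + v₀ ξ * (((1 : ℝ) / (2 * (1 + ‖ξ‖ ^ 2)) : ℝ) : ℂ)) * ((E1 ζ t ξ : ℝ) : ℂ)

/-- The Fourier transform of the solution of the damped plate equation with data `u₀, u₁`. -/
def uhat (ζ : ℝ) (u₀ u₁ : Rn n → ℝ) (t : ℝ) (ξ : Rn n) : ℂ :=
  uhatC ζ (ftr u₀) (ftr u₁) t ξ

/-- The wave-like profile
`û₁(ξ) e^{-t/(2|ξ|²)} sin(t|ξ|)/|ξ| + û₀(ξ) e^{-t/(2|ξ|²)} cos(t|ξ|)`,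
in terms of the Fourier transforms of the data. -/
def waveC (v₀ v₁ : Rn n → ℂ) (t : ℝ) (ξ : Rn n) : ℂ :=
  v₁ ξ * ((Real.exp (-t / (2 * ‖ξ‖ ^ 2)) * (Real.sin (t * ‖ξ‖) / ‖ξ‖) : ℝ) : ℂ) +
    v₀ ξ * ((Real.exp (-t / (2 * ‖ξ‖ ^ 2)) * Real.cos (t * ‖ξ‖) : ℝ) : ℂ)

/-- The wave-like profile for real data `u₀, u₁`. -/
def wave (u₀ u₁ : Rn n → ℝ) (t : ℝ) (ξ : Rn n) : ℂ := waveC (ftr u₀) (ftr u₁) t ξ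

/-- Membership in `H^l`, expressed on the Fourier side. -/
def MemHC (l : ℝ) (v : Rn n → ℂ) : Prop :=
  Integrable fun ξ : Rn n => (1 + ‖ξ‖ ^ 2) ^ l * ‖v ξ‖ ^ 2

/-- The `H^l` norm, expressed on the Fourier side. -/
def HNormC (l : ℝ) (v : Rn n → ℂ) : ℝ :=
  (∫ ξ : Rn n, (1 + ‖ξ‖ ^ 2) ^ l * ‖v ξ‖ ^ 2) ^ ((1 : ℝ) / 2)

/-- `f ∈ H^l(ℝⁿ)`. -/
def MemH (l : ℝ) (f : Rn n → ℝ) : Prop := MemHC l (ftr f)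

/-- `‖f‖_{H^l}`. -/
def HNorm (l : ℝ) (f : Rn n → ℝ) : ℝ := HNormC l (ftr f)

/-- `‖f‖_{1,1} = ∫ (1+|x|)|f(x)| dx`. -/
def Norm11 (f : Rn n → ℝ) : ℝ := ∫ x : Rn n, (1 + ‖x‖) * |f x|

/-- `f ∈ L^{1,1}(ℝⁿ)`. -/
def MemL11 (f : Rn n → ℝ) : Prop :=
  Integrable f ∧ Integrable fun x : Rn n => (1 + ‖x‖) * |f x|

/-- `P_j = ∫ u_j(x) dx`. -/
def Pint (f : Rn n → ℝ) : ℝ := ∫ x : Rn n, f x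

/-- `I₀ = ‖u₁‖_{H^l} + ‖u₀‖_{H^{l+1}} + ‖u₁‖_{1,1} + ‖u₀‖_{1,1}`. -/
def I0 (l : ℝ) (u₀ u₁ : Rn n → ℝ) : ℝ :=
  HNorm l u₁ + HNorm (l + 1) u₀ + Norm11 u₁ + Norm11 u₀

/-- The heat-like profile `(P₁ + P₀) e^{-t|ξ|²}`. -/
def heat (u₀ u₁ : Rn n → ℝ) (t : ℝ) (ξ : Rn n) : ℂ :=
  (((Pint u₁ + Pint u₀) * Real.exp (-t * ‖ξ‖ ^ 2) : ℝ) : ℂ)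

/-- `ζ` is the unique number in `(0,1)` with `4ζ²(1+ζ²)² = 1`. -/
def zetaCond (ζ : ℝ) : Prop := 0 < ζ ∧ ζ < 1 ∧ 4 * ζ ^ 2 * (1 + ζ ^ 2) ^ 2 = 1

end DampedPlate

namespace Real

lemma cosh_le_exp {y : ℝ} (hy : 0 ≤ y) : cosh y ≤ exp y := by
  rw [← cosh_add_sinh]
  linarith [sinh_nonneg_iff.2 hy]

lemma sinh_le_exp_div_two (y : ℝ) : sinh y ≤ exp y / 2 := by
  rw [sinh_eq]
  linarith [exp_pos (-y)]

lemma sinh_le_mul_exp (y : ℝ) : sinh y ≤ y * exp y := by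
  have h : exp (-y) = exp y * exp (-(2 * y)) := by rw [← exp_add]; ring_nf
  rw [sinh_eq, h]
  nlinarith [add_one_le_exp (-(2 * y)), exp_pos y]

lemma abs_sin_mul_div_le {t : ℝ} (ht : 0 ≤ t) (x : ℝ) : |sin (t * x) / x| ≤ t := by
  rcases eq_or_ne x 0 with rfl | hx
  · simpa using ht
  rw [abs_div, div_le_iff₀ (abs_pos.2 hx)]
  calc |sin (t * x)| ≤ |t * x| := abs_sin_le_abs
    _ = t * |x| := by rw [abs_mul, abs_of_nonneg ht]

lemma rpow_mul_exp_neg_le {q y : ℝ} (hq : 0 ≤ q) (hy : 0 ≤ y) : y ^ q * exp (-y) ≤ q ^ q := by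
  rcases hq.eq_or_lt with rfl | hq
  · simpa using hy
  have hyq : y ≤ q * exp (y / q) := by
    have := add_one_le_exp (y / q)
    rw [div_add_one hq.ne', div_le_iff₀ hq] at this
    nlinarith [exp_pos (y / q)]
  calc y ^ q * exp (-y) ≤ (q * exp (y / q)) ^ q * exp (-y) := by gcongr
    _ = q ^ q := by
      rw [mul_rpow hq.le (exp_pos _).le, ← exp_mul, div_mul_cancel₀ y hq.ne', mul_assoc,
        ← exp_add, add_neg_cancel, exp_zero, mul_one]

lemma exp_neg_mul_le {q c t : ℝ} (hq : 0 ≤ q) (hc : 0 < c) (ht : 0 < t) :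
    exp (-(c * t)) ≤ (q / c) ^ q * t ^ (-q) := by
  have h := rpow_mul_exp_neg_le hq (mul_pos hc ht).le
  rw [mul_rpow hc.le ht.le, mul_assoc, ← le_div_iff₀' (rpow_pos_of_pos hc q),
    ← le_div_iff₀' (rpow_pos_of_pos ht q)] at h
  rwa [div_rpow hq hc.le, rpow_neg ht.le, ← div_eq_mul_inv]

lemma sq_mul_exp_neg_mul_le {p c t : ℝ} (hp : 0 ≤ p) (hc : 0 < c) (ht : 0 < t) :
    t ^ 2 * exp (-(c * t)) ≤ ((p + 2) / c) ^ (p + 2) * t ^ (-p) := by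
  calc t ^ 2 * exp (-(c * t)) ≤ t ^ 2 * (((p + 2) / c) ^ (p + 2) * t ^ (-(p + 2))) := by
        gcongr; exact exp_neg_mul_le (by linarith) hc ht
    _ = ((p + 2) / c) ^ (p + 2) * t ^ (-p) := by
        rw [mul_left_comm, ← rpow_natCast, ← rpow_add ht]; norm_num

end Real

namespace DampedPlate

variable {n : ℕ}

lemma norm_ftr_le (f : Rn n → ℝ) (ξ : Rn n) : ‖ftr f ξ‖ ≤ ∫ x, |f x| := by
  refine (norm_integral_le_integral_norm _).trans_eq (integral_congr_ae (ae_of_all _ fun x ↦ ?_))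
  simp [Complex.norm_exp]

lemma norm_ftr_le_Norm11 {f : Rn n → ℝ} (hf : MemL11 f) (ξ : Rn n) : ‖ftr f ξ‖ ≤ Norm11 f :=
  (norm_ftr_le f ξ).trans <| integral_mono hf.1.abs hf.2 fun x ↦
    le_mul_of_one_le_left (abs_nonneg _) (by linarith [norm_nonneg x])

lemma HNorm_nonneg (l : ℝ) (f : Rn n → ℝ) : 0 ≤ HNorm l f :=
  rpow_nonneg (integral_nonneg fun _ ↦ by positivity) _

lemma Norm11_nonneg (f : Rn n → ℝ) : 0 ≤ Norm11 f :=
  integral_nonneg fun _ ↦ by positivity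

/- With `a = 1 + |ξ|²` and `s = 4|ξ|²a²`, the roots of the characteristic equation
`aλ² + λ + |ξ|²a = 0` are `(-1 ± √(1 - s)) / (2a)`, real exactly when `s ≤ 1`, i.e. `|ξ| ≤ ζ`. -/
section LowFrequency

variable {t a s : ℝ}

lemma low_freq_exponent_le (ht : 0 ≤ t) (ha : 0 < a) (hs : s ≤ 1) :
    -t / (2 * a) + t * √(1 - s) / (2 * a) ≤ -(t * s / (4 * a)) := by
  have hsqrt : √(1 - s) ≤ 1 - s / 2 := by
    simpa [sub_eq_add_neg, neg_div] using Real.sqrt_one_add_le (x := -s) (by linarith)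
  have : t * √(1 - s) ≤ t * (1 - s / 2) := by gcongr
  have h : t * s / (4 * a) * (2 * a) = t * s / 2 := by field_simp; ring
  rw [← add_div, div_le_iff₀ (by positivity), neg_mul, h]
  linarith

lemma exp_mul_cosh_le (ht : 0 ≤ t) (ha : 0 < a) (hs : s ≤ 1) :
    exp (-t / (2 * a)) * cosh (t * √(1 - s) / (2 * a)) ≤ exp (-(t * s / (4 * a))) :=
  calc exp (-t / (2 * a)) * cosh (t * √(1 - s) / (2 * a))
      ≤ exp (-t / (2 * a)) * exp (t * √(1 - s) / (2 * a)) := by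
        gcongr; exact Real.cosh_le_exp (by positivity)
    _ ≤ exp (-(t * s / (4 * a))) := by
        rw [← exp_add]; exact exp_le_exp.2 (low_freq_exponent_le ht ha hs)

lemma exp_mul_sinh_div_le (ht : 0 ≤ t) (ha : 0 < a) (hs : s ≤ 1) :
    exp (-t / (2 * a)) * (sinh (t * √(1 - s) / (2 * a)) / (√(1 - s) / (2 * a))) ≤
      t * exp (-(t * s / (4 * a))) := by
  set β := √(1 - s) / (2 * a)
  rw [mul_div_assoc]
  rcases (show 0 ≤ β by positivity).eq_or_lt with hβ | hβ
  · rw [← hβ]; simp only [mul_zero, div_zero]; positivity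
  calc exp (-t / (2 * a)) * (sinh (t * β) / β) ≤ exp (-t / (2 * a)) * (t * exp (t * β)) := by
        gcongr
        rw [div_le_iff₀ hβ]
        linarith [Real.sinh_le_mul_exp (t * β)]
    _ = t * exp (-t / (2 * a) + t * √(1 - s) / (2 * a)) := by rw [exp_add, mul_div_assoc]; ring
    _ ≤ t * exp (-(t * s / (4 * a))) := by gcongr; exact low_freq_exponent_le ht ha hs

lemma exp_mul_sinh_div_le_four (ht : 0 ≤ t) (ha : 0 < a) (hs : s ≤ 1)
    (hβ : 1 / 8 ≤ √(1 - s) / (2 * a)) :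
    exp (-t / (2 * a)) * (sinh (t * √(1 - s) / (2 * a)) / (√(1 - s) / (2 * a))) ≤
      4 * exp (-(t * s / (4 * a))) := by
  calc exp (-t / (2 * a)) * (sinh (t * √(1 - s) / (2 * a)) / (√(1 - s) / (2 * a)))
      ≤ exp (-t / (2 * a)) * (4 * exp (t * √(1 - s) / (2 * a))) := by
        gcongr
        rw [div_le_iff₀ (by linarith)]
        nlinarith [Real.sinh_le_exp_div_two (t * √(1 - s) / (2 * a)),
          exp_pos (t * √(1 - s) / (2 * a))]
    _ = 4 * exp (-t / (2 * a) + t * √(1 - s) / (2 * a)) := by rw [exp_add]; ring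
    _ ≤ 4 * exp (-(t * s / (4 * a))) := by gcongr; exact low_freq_exponent_le ht ha hs

end LowFrequency

lemma four_mul_sq_mul_sq_le {ζ r : ℝ} (hζ : zetaCond ζ) (hr : 0 ≤ r) (hrζ : r ≤ ζ) :
    4 * r ^ 2 * (1 + r ^ 2) ^ 2 ≤ r ^ 2 / ζ ^ 2 := by
  obtain ⟨hζ0, -, hζe⟩ := hζ
  rw [le_div_iff₀ (by positivity)]
  have : (1 + r ^ 2) ^ 2 ≤ (1 + ζ ^ 2) ^ 2 := by gcongr
  nlinarith [mul_le_mul_of_nonneg_left this (by positivity : 0 ≤ 4 * r ^ 2 * ζ ^ 2)]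

lemma four_mul_sq_mul_sq_le_one {ζ r : ℝ} (hζ : zetaCond ζ) (hr : 0 ≤ r) (hrζ : r ≤ ζ) :
    4 * r ^ 2 * (1 + r ^ 2) ^ 2 ≤ 1 :=
  (four_mul_sq_mul_sq_le hζ hr hrζ).trans
    (div_le_one_of_le₀ (pow_le_pow_left₀ hr hrζ 2) (sq_nonneg ζ))

section Multipliers

variable {ζ t : ℝ} {ξ : Rn n}

lemma abs_E0_le_of_le (hζ : zetaCond ζ) (ht : 0 ≤ t) (h : ‖ξ‖ ≤ ζ) :
    |E0 ζ t ξ| ≤ exp (-(t * (‖ξ‖ ^ 2 * (1 + ‖ξ‖ ^ 2)))) := by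
  rw [E0, if_neg h.not_gt, abs_of_nonneg (by positivity)]
  refine (exp_mul_cosh_le (a := 1 + ‖ξ‖ ^ 2) ht (by positivity)
    (four_mul_sq_mul_sq_le_one hζ (norm_nonneg ξ) h)).trans_eq ?_
  congr 2
  field_simp

lemma abs_E1_le_of_le (hζ : zetaCond ζ) (ht : 0 ≤ t) (h : ‖ξ‖ ≤ ζ) :
    |E1 ζ t ξ| ≤ t * exp (-(t * (‖ξ‖ ^ 2 * (1 + ‖ξ‖ ^ 2)))) := by
  rw [E1, if_neg h.not_gt, abs_of_nonneg (by positivity)]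
  refine (exp_mul_sinh_div_le (a := 1 + ‖ξ‖ ^ 2) ht (by positivity)
    (four_mul_sq_mul_sq_le_one hζ (norm_nonneg ξ) h)).trans_eq ?_
  congr 3
  field_simp

lemma abs_E1_le_of_le_half (hζ : zetaCond ζ) (ht : 0 ≤ t) (h : ‖ξ‖ ≤ ζ / 2) :
    |E1 ζ t ξ| ≤ 4 * exp (-(t * (‖ξ‖ ^ 2 * (1 + ‖ξ‖ ^ 2)))) := by
  have hζ' : ‖ξ‖ ≤ ζ := h.trans (by linarith [hζ.1])
  have hs : 4 * ‖ξ‖ ^ 2 * (1 + ‖ξ‖ ^ 2) ^ 2 ≤ 1 / 4 := by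
    refine (four_mul_sq_mul_sq_le hζ (norm_nonneg ξ) hζ').trans ?_
    rw [div_le_iff₀ (pow_pos hζ.1 2)]
    nlinarith [pow_le_pow_left₀ (norm_nonneg ξ) h 2]
  have hsqrt : 1 / 2 ≤ √(1 - 4 * ‖ξ‖ ^ 2 * (1 + ‖ξ‖ ^ 2) ^ 2) :=
    Real.le_sqrt_of_sq_le (by linarith)
  have hr : ‖ξ‖ ^ 2 ≤ 1 := by nlinarith [norm_nonneg ξ, hζ.2.1]
  have hβ : 1 / 8 ≤ √(1 - 4 * ‖ξ‖ ^ 2 * (1 + ‖ξ‖ ^ 2) ^ 2) / (2 * (1 + ‖ξ‖ ^ 2)) := by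
    rw [le_div_iff₀ (by positivity)]
    linarith
  rw [E1, if_neg (h.trans_lt (by linarith [hζ.1])).not_gt, abs_of_nonneg (by positivity)]
  refine (exp_mul_sinh_div_le_four (a := 1 + ‖ξ‖ ^ 2) ht (by positivity) (by linarith)
    hβ).trans_eq ?_
  congr 3
  field_simp

lemma abs_E0_le_of_lt (h : ζ < ‖ξ‖) : |E0 ζ t ξ| ≤ exp (-t / (2 * (1 + ‖ξ‖ ^ 2))) := by
  rw [E0, if_pos h, abs_mul, abs_of_pos (exp_pos _)]
  exact mul_le_of_le_one_right (exp_pos _).le (abs_cos_le_one _)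

lemma abs_E1_le_of_lt (ht : 0 ≤ t) (h : ζ < ‖ξ‖) :
    |E1 ζ t ξ| ≤ t * exp (-t / (2 * (1 + ‖ξ‖ ^ 2))) := by
  rw [E1, if_pos h, abs_mul, abs_of_pos (exp_pos _), mul_comm, mul_div_assoc]
  gcongr
  exact Real.abs_sin_mul_div_le ht _

lemma abs_E1_le_of_one_lt (hζ : ζ < 1) (h : 1 < ‖ξ‖) :
    |E1 ζ t ξ| ≤ 2 / ‖ξ‖ * exp (-t / (2 * (1 + ‖ξ‖ ^ 2))) := by
  set r := ‖ξ‖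
  have hβ : r / 2 ≤ √(4 * r ^ 2 * (1 + r ^ 2) ^ 2 - 1) / (2 * (1 + r ^ 2)) := by
    rw [le_div_iff₀ (by positivity)]
    refine Real.le_sqrt_of_sq_le ?_
    nlinarith [one_lt_pow₀ h two_ne_zero, pow_pos (show 0 < r * (1 + r ^ 2) by positivity) 2]
  have hr : 0 < r := one_pos.trans h
  rw [E1, if_pos (hζ.trans h), abs_mul, abs_of_pos (exp_pos _), mul_comm, abs_div,
    abs_of_pos ((half_pos hr).trans_le hβ)]
  gcongr ?_ * _
  calc |sin _| / _ ≤ 1 / (r / 2) :=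
        div_le_div₀ zero_le_one (abs_sin_le_one _) (half_pos hr) hβ
    _ = 2 / r := by field_simp

lemma abs_E0_le_and_abs_E1_le_of_mid (hζ : zetaCond ζ) (ht : 0 ≤ t) (hξ₁ : ζ / 2 < ‖ξ‖)
    (hξ₂ : ‖ξ‖ ≤ 1) :
    |E0 ζ t ξ| ≤ exp (-(ζ ^ 2 / 4 * t)) ∧ |E1 ζ t ξ| ≤ t * exp (-(ζ ^ 2 / 4 * t)) := by
  rcases le_or_gt ‖ξ‖ ζ with h | h
  · have hg : exp (-(t * (‖ξ‖ ^ 2 * (1 + ‖ξ‖ ^ 2)))) ≤ exp (-(ζ ^ 2 / 4 * t)) := by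
      have h₁ : ζ ^ 2 / 4 ≤ ‖ξ‖ ^ 2 := by nlinarith [hζ.1]
      have h₂ : ‖ξ‖ ^ 2 ≤ ‖ξ‖ ^ 2 * (1 + ‖ξ‖ ^ 2) :=
        le_mul_of_one_le_right (sq_nonneg _) (by linarith [sq_nonneg ‖ξ‖])
      refine exp_le_exp.2 (neg_le_neg ?_)
      rw [mul_comm t]
      exact mul_le_mul_of_nonneg_right (h₁.trans h₂) ht
    exact ⟨(abs_E0_le_of_le hζ ht h).trans hg, (abs_E1_le_of_le hζ ht h).trans (by gcongr)⟩
  · have hg : exp (-t / (2 * (1 + ‖ξ‖ ^ 2))) ≤ exp (-(ζ ^ 2 / 4 * t)) := by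
      have hr : ‖ξ‖ ^ 2 ≤ 1 := pow_le_one₀ (norm_nonneg ξ) hξ₂
      have hζ₁ : ζ ^ 2 ≤ 1 := pow_le_one₀ hζ.1.le hζ.2.1.le
      have : ζ ^ 2 / 4 * (2 * (1 + ‖ξ‖ ^ 2)) ≤ 1 := by nlinarith
      rw [exp_le_exp, neg_div, neg_le_neg_iff, le_div_iff₀ (by positivity)]
      nlinarith [mul_le_mul_of_nonneg_left this ht]
    exact ⟨(abs_E0_le_of_lt h).trans hg, (abs_E1_le_of_lt ht h).trans (by gcongr)⟩

end Multipliers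

section Solution

variable {ζ t N : ℝ} {v₀ v₁ : Rn n → ℂ} {ξ : Rn n}

lemma norm_uhatC_le (ζ t : ℝ) (v₀ v₁ : Rn n → ℂ) (ξ : Rn n) :
    ‖uhatC ζ v₀ v₁ t ξ‖ ≤ ‖v₀ ξ‖ * |E0 ζ t ξ| + (‖v₁ ξ‖ + ‖v₀ ξ‖ / 2) * |E1 ζ t ξ| := by
  have hc : |1 / (2 * (1 + ‖ξ‖ ^ 2))| ≤ 1 / 2 := by
    rw [abs_of_pos (by positivity)]
    gcongr
    nlinarith [sq_nonneg ‖ξ‖]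
  refine (norm_add_le _ _).trans ?_
  simp only [norm_mul, Complex.norm_real, Real.norm_eq_abs]
  gcongr
  refine (norm_add_le _ _).trans ?_
  rw [norm_mul, Complex.norm_real, Real.norm_eq_abs]
  gcongr
  exact (mul_le_mul_of_nonneg_left hc (norm_nonneg _)).trans_eq (by ring)

lemma norm_uhatC_sq_le_of_le_half (hζ : zetaCond ζ) (ht : 0 ≤ t) (hξ : ‖ξ‖ ≤ ζ / 2)
    (h₀ : ‖v₀ ξ‖ ≤ N) (h₁ : ‖v₁ ξ‖ ≤ N) :
    ‖uhatC ζ v₀ v₁ t ξ‖ ^ 2 ≤ 49 * N ^ 2 * exp (-(2 * t) * ‖ξ‖ ^ 2) := by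
  have hg : exp (-(t * (‖ξ‖ ^ 2 * (1 + ‖ξ‖ ^ 2)))) ≤ exp (-(t * ‖ξ‖ ^ 2)) := by
    gcongr
    nlinarith [sq_nonneg ‖ξ‖]
  have hE₀ := (abs_E0_le_of_le hζ ht (hξ.trans (by linarith [hζ.1]))).trans hg
  have hE₁ := (abs_E1_le_of_le_half hζ ht hξ).trans (mul_le_mul_of_nonneg_left hg (by norm_num))
  have hN : 0 ≤ N := (norm_nonneg _).trans h₀
  have h : ‖uhatC ζ v₀ v₁ t ξ‖ ≤ 7 * N * exp (-(t * ‖ξ‖ ^ 2)) :=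
    calc ‖uhatC ζ v₀ v₁ t ξ‖ ≤ ‖v₀ ξ‖ * |E0 ζ t ξ| + (‖v₁ ξ‖ + ‖v₀ ξ‖ / 2) * |E1 ζ t ξ| :=
          norm_uhatC_le ζ t v₀ v₁ ξ
      _ ≤ N * exp (-(t * ‖ξ‖ ^ 2)) + (N + N / 2) * (4 * exp (-(t * ‖ξ‖ ^ 2))) := by gcongr
      _ = 7 * N * exp (-(t * ‖ξ‖ ^ 2)) := by ring
  calc ‖uhatC ζ v₀ v₁ t ξ‖ ^ 2 ≤ (7 * N * exp (-(t * ‖ξ‖ ^ 2))) ^ 2 := by gcongr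
    _ = 49 * N ^ 2 * exp (-(2 * t) * ‖ξ‖ ^ 2) := by rw [mul_pow, ← exp_nat_mul]; ring_nf

lemma norm_uhatC_sq_le_of_mid (hζ : zetaCond ζ) (ht : 1 ≤ t) (hξ₁ : ζ / 2 < ‖ξ‖)
    (hξ₂ : ‖ξ‖ ≤ 1) :
    ‖uhatC ζ v₀ v₁ t ξ‖ ^ 2 ≤
      5 * (t ^ 2 * exp (-(ζ ^ 2 / 2 * t))) * (‖v₀ ξ‖ ^ 2 + ‖v₁ ξ‖ ^ 2) := by
  set g := exp (-(ζ ^ 2 / 4 * t))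
  have hE := abs_E0_le_and_abs_E1_le_of_mid hζ (by linarith) hξ₁ hξ₂ (t := t)
  have h : ‖uhatC ζ v₀ v₁ t ξ‖ ≤ (3 / 2 * ‖v₀ ξ‖ + ‖v₁ ξ‖) * (t * g) :=
    calc ‖uhatC ζ v₀ v₁ t ξ‖ ≤ ‖v₀ ξ‖ * |E0 ζ t ξ| + (‖v₁ ξ‖ + ‖v₀ ξ‖ / 2) * |E1 ζ t ξ| :=
          norm_uhatC_le ζ t v₀ v₁ ξ
      _ ≤ ‖v₀ ξ‖ * (t * g) + (‖v₁ ξ‖ + ‖v₀ ξ‖ / 2) * (t * g) := by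
          gcongr
          · exact hE.1.trans (le_mul_of_one_le_left (exp_pos _).le ht)
          · exact hE.2
      _ = (3 / 2 * ‖v₀ ξ‖ + ‖v₁ ξ‖) * (t * g) := by ring
  calc ‖uhatC ζ v₀ v₁ t ξ‖ ^ 2 ≤ ((3 / 2 * ‖v₀ ξ‖ + ‖v₁ ξ‖) * (t * g)) ^ 2 := by gcongr
    _ = (3 / 2 * ‖v₀ ξ‖ + ‖v₁ ξ‖) ^ 2 * (t ^ 2 * exp (-(ζ ^ 2 / 2 * t))) := by
        rw [mul_pow, mul_pow, ← exp_nat_mul]; ring_nf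
    _ ≤ 5 * (‖v₀ ξ‖ ^ 2 + ‖v₁ ξ‖ ^ 2) * (t ^ 2 * exp (-(ζ ^ 2 / 2 * t))) := by
        gcongr
        nlinarith [sq_nonneg (‖v₀ ξ‖ - ‖v₁ ξ‖), sq_nonneg (3 * ‖v₀ ξ‖ - 2 * ‖v₁ ξ‖)]
    _ = _ := by ring

lemma norm_uhatC_le_of_one_lt (hζ : ζ < 1) (hξ : 1 < ‖ξ‖) :
    ‖uhatC ζ v₀ v₁ t ξ‖ ≤ (2 * ‖v₀ ξ‖ + 2 * (‖v₁ ξ‖ / ‖ξ‖)) * exp (-t / (2 * (1 + ‖ξ‖ ^ 2))) :=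
  calc ‖uhatC ζ v₀ v₁ t ξ‖ ≤ ‖v₀ ξ‖ * |E0 ζ t ξ| + (‖v₁ ξ‖ + ‖v₀ ξ‖ / 2) * |E1 ζ t ξ| :=
        norm_uhatC_le ζ t v₀ v₁ ξ
    _ ≤ ‖v₀ ξ‖ * exp (-t / (2 * (1 + ‖ξ‖ ^ 2))) +
          (‖v₁ ξ‖ + ‖v₀ ξ‖ / 2) * (2 / ‖ξ‖ * exp (-t / (2 * (1 + ‖ξ‖ ^ 2)))) := by
        gcongr
        · exact abs_E0_le_of_lt (hζ.trans hξ)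
        · exact abs_E1_le_of_one_lt hζ hξ
    _ = (‖v₀ ξ‖ + ‖v₀ ξ‖ / ‖ξ‖ + 2 * (‖v₁ ξ‖ / ‖ξ‖)) * exp (-t / (2 * (1 + ‖ξ‖ ^ 2))) := by
        ring
    _ ≤ _ := by
        gcongr
        linarith [div_le_self (norm_nonneg (v₀ ξ)) hξ.le]

lemma norm_uhatC_sq_le_of_one_lt {l : ℝ} (hζ : ζ < 1) (hl : 0 ≤ l + 1) (ht : 0 < t)
    (hξ : 1 < ‖ξ‖) :
    ‖uhatC ζ v₀ v₁ t ξ‖ ^ 2 ≤ 16 * (l + 1) ^ (l + 1) * t ^ (-(l + 1)) *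
      ((1 + ‖ξ‖ ^ 2) ^ (l + 1) * ‖v₀ ξ‖ ^ 2 + (1 + ‖ξ‖ ^ 2) ^ l * ‖v₁ ξ‖ ^ 2) := by
  set r := ‖ξ‖
  set x := ‖v₀ ξ‖
  set y := ‖v₁ ξ‖
  set a := 1 + r ^ 2
  have ha : 0 < a := by positivity
  have hy : (y / r) ^ 2 ≤ 2 * y ^ 2 / a := by
    rw [div_pow, div_le_div_iff₀ (by positivity) ha]
    nlinarith [sq_nonneg y, one_lt_pow₀ hξ two_ne_zero]
  have hexp : exp (-t / (2 * a)) ^ 2 = exp (-(a⁻¹ * t)) := by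
    rw [← exp_nat_mul]
    congr 1
    field_simp
    ring
  have hdecay : exp (-(a⁻¹ * t)) ≤ (l + 1) ^ (l + 1) * a ^ (l + 1) * t ^ (-(l + 1)) := by
    have := Real.exp_neg_mul_le hl (inv_pos.2 ha) ht
    rwa [div_inv_eq_mul, mul_rpow hl ha.le] at this
  have hK : 0 ≤ (l + 1) ^ (l + 1) * t ^ (-(l + 1)) := by positivity
  calc ‖uhatC ζ v₀ v₁ t ξ‖ ^ 2 ≤ ((2 * x + 2 * (y / r)) * exp (-t / (2 * a))) ^ 2 := by
        gcongr; exact norm_uhatC_le_of_one_lt hζ hξ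
    _ ≤ 8 * (x ^ 2 + 2 * y ^ 2 / a) * exp (-t / (2 * a)) ^ 2 := by
        rw [mul_pow]
        gcongr
        nlinarith [sq_nonneg (x - y / r)]
    _ ≤ 8 * (x ^ 2 + 2 * y ^ 2 / a) * ((l + 1) ^ (l + 1) * a ^ (l + 1) * t ^ (-(l + 1))) := by
        rw [hexp]; gcongr
    _ = 8 * ((l + 1) ^ (l + 1) * t ^ (-(l + 1))) *
          (a ^ (l + 1) * x ^ 2 + 2 * (a ^ l * y ^ 2)) := by
        rw [rpow_add_one ha.ne']
        field_simp
    _ ≤ 16 * (l + 1) ^ (l + 1) * t ^ (-(l + 1)) * (a ^ (l + 1) * x ^ 2 + a ^ l * y ^ 2) := by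
        have : 0 ≤ a ^ (l + 1) * x ^ 2 := by positivity
        nlinarith [mul_le_mul_of_nonneg_left this hK]

lemma norm_uhatC_sq_le {l : ℝ} (hζ : zetaCond ζ) (hl : 0 ≤ l) (ht : 1 ≤ t)
    (h₀ : ‖v₀ ξ‖ ≤ N) (h₁ : ‖v₁ ξ‖ ≤ N) :
    ‖uhatC ζ v₀ v₁ t ξ‖ ^ 2 ≤ 49 * N ^ 2 * exp (-(2 * t) * ‖ξ‖ ^ 2) +
      (5 * (t ^ 2 * exp (-(ζ ^ 2 / 2 * t))) + 16 * (l + 1) ^ (l + 1) * t ^ (-(l + 1))) *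
        ((1 + ‖ξ‖ ^ 2) ^ (l + 1) * ‖v₀ ξ‖ ^ 2 + (1 + ‖ξ‖ ^ 2) ^ l * ‖v₁ ξ‖ ^ 2) := by
  have hw : ∀ p : ℝ, 0 ≤ p → 1 ≤ (1 + ‖ξ‖ ^ 2) ^ p := fun p hp ↦
    one_le_rpow (by linarith [sq_nonneg ‖ξ‖]) hp
  have hW : ‖v₀ ξ‖ ^ 2 + ‖v₁ ξ‖ ^ 2 ≤
      (1 + ‖ξ‖ ^ 2) ^ (l + 1) * ‖v₀ ξ‖ ^ 2 + (1 + ‖ξ‖ ^ 2) ^ l * ‖v₁ ξ‖ ^ 2 :=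
    add_le_add (le_mul_of_one_le_left (sq_nonneg _) (hw _ (by linarith)))
      (le_mul_of_one_le_left (sq_nonneg _) (hw _ hl))
  have hW₀ : 0 ≤ (1 + ‖ξ‖ ^ 2) ^ (l + 1) * ‖v₀ ξ‖ ^ 2 + (1 + ‖ξ‖ ^ 2) ^ l * ‖v₁ ξ‖ ^ 2 :=
    (by positivity : (0 : ℝ) ≤ ‖v₀ ξ‖ ^ 2 + ‖v₁ ξ‖ ^ 2).trans hW
  have hB : 0 ≤ 5 * (t ^ 2 * exp (-(ζ ^ 2 / 2 * t))) := by positivity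
  have hC : 0 ≤ 16 * (l + 1) ^ (l + 1) * t ^ (-(l + 1)) := by
    have : 0 ≤ l + 1 := by linarith
    positivity
  have hBW := mul_le_mul_of_nonneg_left hW hB
  have hBW₀ := mul_nonneg hB hW₀
  have hCW₀ := mul_nonneg hC hW₀
  have hA : 0 ≤ 49 * N ^ 2 * exp (-(2 * t) * ‖ξ‖ ^ 2) := by positivity
  rw [add_mul]
  rcases le_or_gt ‖ξ‖ (ζ / 2) with hξ | hξ
  · linarith [norm_uhatC_sq_le_of_le_half (t := t) hζ (by linarith) hξ h₀ h₁]
  rcases le_or_gt ‖ξ‖ 1 with hξ' | hξ'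
  · linarith [norm_uhatC_sq_le_of_mid (v₀ := v₀) (v₁ := v₁) hζ ht hξ hξ']
  · linarith [norm_uhatC_sq_le_of_one_lt (v₀ := v₀) (v₁ := v₁) (l := l) (t := t) hζ.2.1
      (by linarith) (by linarith) hξ']

end Solution

lemma integral_exp_neg_mul_sq_norm {b : ℝ} (hb : 0 < b) :
    ∫ ξ : Rn n, exp (-b * ‖ξ‖ ^ 2) = (π / b) ^ ((n : ℝ) / 2) := by
  rw [GaussianFourier.integral_rexp_neg_mul_sq_norm hb, finrank_euclideanSpace_fin]

lemma integrable_exp_neg_mul_sq_norm {b : ℝ} (hb : 0 < b) :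
    Integrable fun ξ : Rn n ↦ exp (-b * ‖ξ‖ ^ 2) :=
  .of_integral_ne_zero (by rw [integral_exp_neg_mul_sq_norm hb]; positivity)

lemma integral_le_sq_of_HNormC_le {l N : ℝ} {v : Rn n → ℂ} (h : HNormC l v ≤ N) :
    ∫ ξ, (1 + ‖ξ‖ ^ 2) ^ l * ‖v ξ‖ ^ 2 ≤ N ^ 2 := by
  rw [HNormC, ← sqrt_eq_rpow] at h
  exact (Real.sqrt_le_iff.1 h).2

def decayConst (n : ℕ) (l ζ : ℝ) : ℝ :=
  49 * π ^ ((n : ℝ) / 2) +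
    2 * (5 * (((n : ℝ) / 2 + 2) / (ζ ^ 2 / 2)) ^ ((n : ℝ) / 2 + 2) + 16 * (l + 1) ^ (l + 1))

lemma decayConst_pos (n : ℕ) {l : ℝ} (hl : 0 ≤ l) (ζ : ℝ) : 0 < decayConst n l ζ := by
  have : 0 ≤ l + 1 := by linarith
  unfold decayConst; positivity

theorem integral_norm_uhatC_sq_le {ζ l t N : ℝ} {v₀ v₁ : Rn n → ℂ} (hζ : zetaCond ζ)
    (hl : 0 ≤ l) (hnl : (n : ℝ) / 2 ≤ l + 1) (ht : 1 ≤ t)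
    (h₀ : ∀ ξ, ‖v₀ ξ‖ ≤ N) (h₁ : ∀ ξ, ‖v₁ ξ‖ ≤ N) (hv₀ : MemHC (l + 1) v₀) (hv₁ : MemHC l v₁)
    (hH₀ : HNormC (l + 1) v₀ ≤ N) (hH₁ : HNormC l v₁ ≤ N) :
    ∫ ξ, ‖uhatC ζ v₀ v₁ t ξ‖ ^ 2 ≤
      decayConst n l ζ * N ^ 2 * t ^ (-((n : ℝ) / 2)) := by
  have ht₀ : 0 < t := one_pos.trans_le ht
  set c := 5 * (t ^ 2 * exp (-(ζ ^ 2 / 2 * t))) + 16 * (l + 1) ^ (l + 1) * t ^ (-(l + 1))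
  have hc : c ≤ (5 * (((n : ℝ) / 2 + 2) / (ζ ^ 2 / 2)) ^ ((n : ℝ) / 2 + 2) +
      16 * (l + 1) ^ (l + 1)) * t ^ (-((n : ℝ) / 2)) := by
    have h₂ := sq_mul_exp_neg_mul_le (p := (n : ℝ) / 2) (c := ζ ^ 2 / 2) (by positivity)
      (by have := hζ.1; positivity) ht₀
    have h₃ : t ^ (-(l + 1)) ≤ t ^ (-((n : ℝ) / 2)) :=
      rpow_le_rpow_of_exponent_le ht (by linarith)
    have : 0 ≤ (l + 1) ^ (l + 1) := rpow_nonneg (by linarith) _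
    nlinarith [mul_le_mul_of_nonneg_left h₃ this]
  have hgauss : (π / (2 * t)) ^ ((n : ℝ) / 2) ≤ π ^ ((n : ℝ) / 2) * t ^ (-((n : ℝ) / 2)) := by
    rw [div_rpow pi_pos.le (by positivity), rpow_neg ht₀.le, ← div_eq_mul_inv]
    gcongr
    linarith
  have hc₀ : 0 ≤ c := by
    have : 0 ≤ l + 1 := by linarith
    positivity
  have hI₁ : Integrable fun ξ : Rn n ↦ 49 * N ^ 2 * exp (-(2 * t) * ‖ξ‖ ^ 2) :=
    (integrable_exp_neg_mul_sq_norm (by positivity)).const_mul _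
  have hI₂ : Integrable fun ξ : Rn n ↦
      c * ((1 + ‖ξ‖ ^ 2) ^ (l + 1) * ‖v₀ ξ‖ ^ 2 + (1 + ‖ξ‖ ^ 2) ^ l * ‖v₁ ξ‖ ^ 2) :=
    (hv₀.add hv₁).const_mul c
  calc ∫ ξ, ‖uhatC ζ v₀ v₁ t ξ‖ ^ 2
      ≤ ∫ ξ, (49 * N ^ 2 * exp (-(2 * t) * ‖ξ‖ ^ 2) +
          c * ((1 + ‖ξ‖ ^ 2) ^ (l + 1) * ‖v₀ ξ‖ ^ 2 + (1 + ‖ξ‖ ^ 2) ^ l * ‖v₁ ξ‖ ^ 2)) :=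
        integral_mono_of_nonneg (ae_of_all _ fun _ ↦ by positivity) (hI₁.add hI₂)
          (ae_of_all _ fun ξ ↦ norm_uhatC_sq_le hζ hl ht (h₀ ξ) (h₁ ξ))
    _ = 49 * N ^ 2 * (π / (2 * t)) ^ ((n : ℝ) / 2) +
          c * ((∫ ξ, (1 + ‖ξ‖ ^ 2) ^ (l + 1) * ‖v₀ ξ‖ ^ 2) +
            ∫ ξ, (1 + ‖ξ‖ ^ 2) ^ l * ‖v₁ ξ‖ ^ 2) := by
        rw [integral_add hI₁ hI₂, integral_const_mul, integral_const_mul, integral_add hv₀ hv₁,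
          integral_exp_neg_mul_sq_norm (by positivity)]
    _ ≤ 49 * N ^ 2 * (π ^ ((n : ℝ) / 2) * t ^ (-((n : ℝ) / 2))) +
          (5 * (((n : ℝ) / 2 + 2) / (ζ ^ 2 / 2)) ^ ((n : ℝ) / 2 + 2) +
            16 * (l + 1) ^ (l + 1)) * t ^ (-((n : ℝ) / 2)) * (N ^ 2 + N ^ 2) := by
        gcongr
        · exact integral_le_sq_of_HNormC_le hH₀
        · exact integral_le_sq_of_HNormC_le hH₁
    _ = _ := by rw [decayConst]; ring

end DampedPlate

open DampedPlate

theorem stmt_13_general (n : ℕ) (l : ℝ) (hl : 2 ≤ l)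
    (hl2 : 6 ≤ n → (n : ℝ) / 2 - 1 ≤ l)
    (ζ : ℝ) (hζ : zetaCond ζ) :
    ∃ C > (0 : ℝ), ∀ u₀ u₁ : Rn n → ℝ,
      MemH (l + 1) u₀ → MemL11 u₀ → MemH l u₁ → MemL11 u₁ →
      ∀ t : ℝ, 1 ≤ t →
        (∫ ξ : Rn n, ‖uhat ζ u₀ u₁ t ξ‖ ^ 2) ^ ((1 : ℝ) / 2) ≤
          C * I0 l u₀ u₁ * t ^ (-((n : ℝ) / 4)) := by
  have hnl : (n : ℝ) / 2 ≤ l + 1 := by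
    rcases le_or_gt 6 n with h | h
    · linarith [hl2 h]
    · have : (n : ℝ) ≤ 5 := by exact_mod_cast Nat.lt_succ_iff.mp h
      linarith
  have hC := decayConst_pos n (by linarith : 0 ≤ l) ζ
  refine ⟨√(decayConst n l ζ), sqrt_pos.2 hC, fun u₀ u₁ hH₀ hL₀ hH₁ hL₁ t ht ↦ ?_⟩
  have := HNorm_nonneg l u₁
  have := HNorm_nonneg (l + 1) u₀
  have := Norm11_nonneg u₀
  have := Norm11_nonneg u₁
  have h := integral_norm_uhatC_sq_le (v₀ := ftr u₀) (v₁ := ftr u₁) (N := I0 l u₀ u₁) hζ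
    (by linarith) hnl ht (fun ξ ↦ (norm_ftr_le_Norm11 hL₀ ξ).trans (by unfold I0; linarith))
    (fun ξ ↦ (norm_ftr_le_Norm11 hL₁ ξ).trans (by unfold I0; linarith)) hH₀ hH₁
    (by change HNorm (l + 1) u₀ ≤ _; unfold I0; linarith)
    (by change HNorm l u₁ ≤ _; unfold I0; linarith)
  rw [← sqrt_eq_rpow]
  refine Real.sqrt_le_iff.2 ⟨by unfold I0; positivity, h.trans_eq ?_⟩
  rw [mul_pow, mul_pow, sq_sqrt hC.le, ← rpow_mul_natCast (by positivity)]
  ring_nf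

/-- **Theorem 5.2** (optimal `L²` decay in the parabolic-like regime). -/
theorem stmt_13 (n : ℕ) (hn : 1 ≤ n) (l : ℝ) (hl : 2 ≤ l)
    (hl2 : 6 ≤ n → (n : ℝ) / 2 - 1 ≤ l)
    (ζ : ℝ) (hζ : zetaCond ζ) :
    ∃ C > (0 : ℝ), ∀ u₀ u₁ : Rn n → ℝ,
      MemH (l + 1) u₀ → MemL11 u₀ → MemH l u₁ → MemL11 u₁ →
      ∀ t : ℝ, 1 ≤ t →
        (∫ ξ : Rn n, ‖uhat ζ u₀ u₁ t ξ‖ ^ 2) ^ ((1 : ℝ) / 2) ≤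
          C * I0 l u₀ u₁ * t ^ (-((n : ℝ) / 4)) :=
  stmt_13_general n l hl hl2 ζ hζ
end
end

section
/- Let n ≥ 1 be an integer, l ≥ 0 a real number, u₁ ∈ H^{l}(ℝⁿ) and u₀ ∈ H^{l+1}(ℝⁿ). Then there exists a constant C > 0, depending only on n and l, such that for all t ≥ 1, ( ∫_{|ξ| ≥ 1} | û₁(ξ)·e^{−t/(2|ξ|²)}·sin(t|ξ|)/|ξ| + û₀(ξ)·e^{−t/(2|ξ|²)}·cos(t|ξ|) |² dξ )^{1/2} ≤ C·( ‖u₁‖_{H^l} + ‖u₀‖_{H^{l+1}} )·t^{−(l+1)/2}. -/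
open MeasureTheory Real Set

noncomputable section

open DampedPlate

/-!
Since `|sin|, |cos| ≤ 1`, everything reduces to the elementary bound `e^{-x} ≤ s^s x^{-s}`
(from `x/s ≤ e^{x/s}`), used with `x = t/|ξ|²` and `s = l + 1`: it trades the damping factor
`e^{-t/|ξ|²}` for `t^{-(l+1)} |ξ|^{2(l+1)}`, and the powers of `|ξ|` are absorbed by the Sobolev
weights; the extra `1/|ξ|²` in the sine term is why `û₁` is only needed in `H^l`.
-/
lemma Real.rpow_le_rpow_mul_exp {s x : ℝ} (hs : 0 < s) (hx : 0 ≤ x) :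
    x ^ s ≤ s ^ s * exp x := by
  calc x ^ s = s ^ s * (x / s) ^ s := by
        rw [Real.div_rpow hx hs.le, mul_div_cancel₀ _ (Real.rpow_pos_of_pos hs s).ne']
    _ ≤ s ^ s * exp (x / s) ^ s := by
        gcongr
        linarith [Real.add_one_le_exp (x / s)]
    _ = s ^ s * exp x := by rw [← Real.exp_mul, div_mul_cancel₀ x hs.ne']

lemma Real.exp_neg_le_rpow_mul_rpow_neg {s x : ℝ} (hs : 0 < s) (hx : 0 < x) :
    exp (-x) ≤ s ^ s * x ^ (-s) := by
  rw [Real.exp_neg, Real.rpow_neg hx.le, ← div_eq_mul_inv, le_div_iff₀ (Real.rpow_pos_of_pos hx s),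
    inv_mul_le_iff₀ (Real.exp_pos x), mul_comm]
  exact Real.rpow_le_rpow_mul_exp hs hx.le

namespace DampedPlate

lemma exp_neg_div_two_sq_sq_le {s t r : ℝ} (hs : 0 < s) (ht : 0 < t) (hr : 0 < r) :
    exp (-t / (2 * r ^ 2)) ^ 2 ≤ s ^ s * t ^ (-s) * (r ^ 2) ^ s := by
  have hr2 : 0 < r ^ 2 := by positivity
  have hexp : exp (-t / (2 * r ^ 2)) ^ 2 = exp (-(t / r ^ 2)) := by
    rw [← Real.exp_nat_mul]
    congr 1
    field_simp
    norm_num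
  have hpow : (t / r ^ 2) ^ (-s) = t ^ (-s) * (r ^ 2) ^ s := by
    rw [Real.div_rpow ht.le hr2.le, Real.rpow_neg hr2.le, div_inv_eq_mul]
  rw [hexp, mul_assoc, ← hpow]
  exact Real.exp_neg_le_rpow_mul_rpow_neg hs (div_pos ht hr2)

lemma exp_mul_cos_sq_le {s t r : ℝ} (hs : 0 < s) (ht : 0 < t) (hr : 0 < r) :
    (exp (-t / (2 * r ^ 2)) * cos (t * r)) ^ 2 ≤ s ^ s * t ^ (-s) * (1 + r ^ 2) ^ s :=
  calc (exp (-t / (2 * r ^ 2)) * cos (t * r)) ^ 2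
      ≤ exp (-t / (2 * r ^ 2)) ^ 2 := by
        rw [mul_pow]
        exact mul_le_of_le_one_right (by positivity) (cos_sq_le_one _)
    _ ≤ s ^ s * t ^ (-s) * (r ^ 2) ^ s := exp_neg_div_two_sq_sq_le hs ht hr
    _ ≤ s ^ s * t ^ (-s) * (1 + r ^ 2) ^ s := by gcongr; linarith

lemma exp_mul_sin_div_sq_le {l t r : ℝ} (hl : 0 ≤ l) (ht : 0 < t) (hr : 0 < r) :
    (exp (-t / (2 * r ^ 2)) * (sin (t * r) / r)) ^ 2 ≤
      (l + 1) ^ (l + 1) * t ^ (-(l + 1)) * (1 + r ^ 2) ^ l := by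
  have hr2 : 0 < r ^ 2 := by positivity
  calc (exp (-t / (2 * r ^ 2)) * (sin (t * r) / r)) ^ 2
      ≤ exp (-t / (2 * r ^ 2)) ^ 2 / r ^ 2 := by
        rw [mul_pow, div_pow, ← mul_div_assoc]
        gcongr
        exact mul_le_of_le_one_right (by positivity) (sin_sq_le_one _)
    _ ≤ (l + 1) ^ (l + 1) * t ^ (-(l + 1)) * (r ^ 2) ^ (l + 1) / r ^ 2 := by
        gcongr
        exact exp_neg_div_two_sq_sq_le (by linarith) ht hr
    _ = (l + 1) ^ (l + 1) * t ^ (-(l + 1)) * (r ^ 2) ^ l := by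
        rw [Real.rpow_add_one hr2.ne', mul_div_assoc, mul_div_cancel_right₀ _ hr2.ne']
    _ ≤ (l + 1) ^ (l + 1) * t ^ (-(l + 1)) * (1 + r ^ 2) ^ l := by gcongr; linarith

variable {n : ℕ}

lemma HNormC_sq (l : ℝ) (v : Rn n → ℂ) :
    HNormC l v ^ 2 = ∫ ξ : Rn n, (1 + ‖ξ‖ ^ 2) ^ l * ‖v ξ‖ ^ 2 := by
  rw [HNormC, ← Real.sqrt_eq_rpow, Real.sq_sqrt (integral_nonneg fun ξ => by positivity)]

lemma HNormC_nonneg (l : ℝ) (v : Rn n → ℂ) : 0 ≤ HNormC l v :=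
  Real.rpow_nonneg (integral_nonneg fun ξ => by positivity) _

lemma norm_waveC_sq_le {l t : ℝ} (hl : 0 ≤ l) (ht : 0 < t) (v₀ v₁ : Rn n → ℂ) {ξ : Rn n}
    (hξ : ξ ≠ 0) :
    ‖waveC v₀ v₁ t ξ‖ ^ 2 ≤ 2 * (l + 1) ^ (l + 1) * t ^ (-(l + 1)) *
      ((1 + ‖ξ‖ ^ 2) ^ l * ‖v₁ ξ‖ ^ 2 + (1 + ‖ξ‖ ^ 2) ^ (l + 1) * ‖v₀ ξ‖ ^ 2) := by
  have hr : 0 < ‖ξ‖ := norm_pos_iff.mpr hξ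
  have h₁ := exp_mul_sin_div_sq_le hl ht hr
  have h₀ := exp_mul_cos_sq_le (by linarith : 0 < l + 1) ht hr
  calc ‖waveC v₀ v₁ t ξ‖ ^ 2
      ≤ 2 * (‖v₁ ξ‖ ^ 2 * (exp (-t / (2 * ‖ξ‖ ^ 2)) * (sin (t * ‖ξ‖) / ‖ξ‖)) ^ 2 +
          ‖v₀ ξ‖ ^ 2 * (exp (-t / (2 * ‖ξ‖ ^ 2)) * cos (t * ‖ξ‖)) ^ 2) := by
        refine (pow_le_pow_left₀ (norm_nonneg _) (norm_add_le _ _) 2).trans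
          (add_sq_le.trans_eq ?_)
        simp only [norm_mul, Complex.norm_real, Real.norm_eq_abs, mul_pow, sq_abs]
    _ ≤ 2 * (‖v₁ ξ‖ ^ 2 * ((l + 1) ^ (l + 1) * t ^ (-(l + 1)) * (1 + ‖ξ‖ ^ 2) ^ l) +
          ‖v₀ ξ‖ ^ 2 * ((l + 1) ^ (l + 1) * t ^ (-(l + 1)) * (1 + ‖ξ‖ ^ 2) ^ (l + 1))) := by
        gcongr
    _ = _ := by ring

lemma setIntegral_norm_waveC_sq_le {l t : ℝ} (hl : 0 ≤ l) (ht : 0 < t) {v₀ v₁ : Rn n → ℂ}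
    (h₀ : MemHC (l + 1) v₀) (h₁ : MemHC l v₁) {S : Set (Rn n)} (hS : MeasurableSet S)
    (h0S : (0 : Rn n) ∉ S) :
    ∫ ξ in S, ‖waveC v₀ v₁ t ξ‖ ^ 2 ≤
      2 * (l + 1) ^ (l + 1) * t ^ (-(l + 1)) * (HNormC l v₁ ^ 2 + HNormC (l + 1) v₀ ^ 2) := by
  set G : Rn n → ℝ := fun ξ => 2 * (l + 1) ^ (l + 1) * t ^ (-(l + 1)) *
    ((1 + ‖ξ‖ ^ 2) ^ l * ‖v₁ ξ‖ ^ 2 + (1 + ‖ξ‖ ^ 2) ^ (l + 1) * ‖v₀ ξ‖ ^ 2)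
  have hG : Integrable G := (h₁.add h₀).const_mul _
  calc ∫ ξ in S, ‖waveC v₀ v₁ t ξ‖ ^ 2
      ≤ ∫ ξ in S, G ξ :=
        integral_mono_of_nonneg (.of_forall fun ξ => by positivity) hG.integrableOn
          ((ae_restrict_iff' hS).mpr (.of_forall fun ξ hξ =>
            norm_waveC_sq_le hl ht v₀ v₁ (ne_of_mem_of_not_mem hξ h0S)))
    _ ≤ ∫ ξ, G ξ := setIntegral_le_integral hG (.of_forall fun ξ => by positivity)
    _ = _ := by rw [integral_const_mul, integral_add h₁ h₀, HNormC_sq, HNormC_sq]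

end DampedPlate

theorem stmt_16_general (n : ℕ) (l : ℝ) (hl : 0 ≤ l) :
    ∃ C > (0 : ℝ), ∀ v₀ v₁ : Rn n → ℂ, MemHC (l + 1) v₀ → MemHC l v₁ →
      ∀ t : ℝ, 1 ≤ t →
        (∫ ξ in {ξ : Rn n | 1 ≤ ‖ξ‖}, ‖waveC v₀ v₁ t ξ‖ ^ 2) ^ ((1 : ℝ) / 2) ≤
          C * (HNormC l v₁ + HNormC (l + 1) v₀) * t ^ (-((l + 1) / 2)) := by
  refine ⟨√(2 * (l + 1) ^ (l + 1)), Real.sqrt_pos.mpr (by positivity),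
    fun v₀ v₁ h₀ h₁ t ht => ?_⟩
  have ht0 : 0 < t := by linarith
  have hS : MeasurableSet {ξ : Rn n | 1 ≤ ‖ξ‖} := measurableSet_le measurable_const measurable_norm
  have hsqrt_t : √(t ^ (-(l + 1))) = t ^ (-((l + 1) / 2)) := by
    rw [Real.sqrt_eq_rpow, ← Real.rpow_mul ht0.le]
    ring_nf
  have ha := HNormC_nonneg l v₁
  have hb := HNormC_nonneg (l + 1) v₀
  have hsqrt_ab : √(HNormC l v₁ ^ 2 + HNormC (l + 1) v₀ ^ 2) ≤ HNormC l v₁ + HNormC (l + 1) v₀ :=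
    Real.sqrt_le_iff.mpr ⟨by positivity, by nlinarith⟩
  calc (∫ ξ in {ξ : Rn n | 1 ≤ ‖ξ‖}, ‖waveC v₀ v₁ t ξ‖ ^ 2) ^ ((1 : ℝ) / 2)
      = √(∫ ξ in {ξ : Rn n | 1 ≤ ‖ξ‖}, ‖waveC v₀ v₁ t ξ‖ ^ 2) := (Real.sqrt_eq_rpow _).symm
    _ ≤ √(2 * (l + 1) ^ (l + 1) * t ^ (-(l + 1)) * (HNormC l v₁ ^ 2 + HNormC (l + 1) v₀ ^ 2)) :=
        Real.sqrt_le_sqrt (setIntegral_norm_waveC_sq_le hl ht0 h₀ h₁ hS (by simp))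
    _ = √(2 * (l + 1) ^ (l + 1)) * t ^ (-((l + 1) / 2)) *
          √(HNormC l v₁ ^ 2 + HNormC (l + 1) v₀ ^ 2) := by
        rw [Real.sqrt_mul (by positivity), Real.sqrt_mul (by positivity), hsqrt_t]
    _ ≤ √(2 * (l + 1) ^ (l + 1)) * (HNormC l v₁ + HNormC (l + 1) v₀) * t ^ (-((l + 1) / 2)) := by
        rw [mul_right_comm]
        gcongr

/-- High-frequency decay of the wave-like profile: in `{|ξ| ≥ 1}` its `L²` norm decays like
`t^{-(l+1)/2}`. Stated on the Fourier side: `v₀ = û₀ ∈ H^{l+1}`, `v₁ = û₁ ∈ H^l`. -/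
theorem stmt_16 (n : ℕ) (hn : 1 ≤ n) (l : ℝ) (hl : 0 ≤ l) :
    ∃ C > (0 : ℝ), ∀ v₀ v₁ : Rn n → ℂ, MemHC (l + 1) v₀ → MemHC l v₁ →
      ∀ t : ℝ, 1 ≤ t →
        (∫ ξ in {ξ : Rn n | 1 ≤ ‖ξ‖}, ‖waveC v₀ v₁ t ξ‖ ^ 2) ^ ((1 : ℝ) / 2) ≤
          C * (HNormC l v₁ + HNormC (l + 1) v₀) * t ^ (-((l + 1) / 2)) :=
  stmt_16_general n l hl
end
end
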